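/- Let {A_n} be a sequence of n×n symmetric matrices with nonnegative entries and zeros on the diagonal satisfying (BD) and (NT), and let (β₀, B₀) ∈ Θ. For x ∈ {-1,1}^n define A_{2,n} := {x : x_i m_i(x) = |m_i(x)| for all i ∈ [n]}, A_{3,n} := {x : x_i m_i(x) = -|m_i(x)| for all i ∈ [n]}, and A_{4,n} := {(1,…,1), (-1,…,-1)}. Then lim_{n→∞} P_{n,β₀,B₀}(A_{2,n}^c ∩ A_{3,n}^c ∩ A_{4,n}^c) = 1. -/

import Mathlib

open Filter

noncomputable section

/-- Spin configuration in `{-1,1}^n` encoded by a Boolean vector. -/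
def spinVec (n : ℕ) (σ : Fin n → Bool) : Fin n → ℝ := fun i => if σ i then 1 else -1

/-- Local field `m_i(x) = ∑_j A i j * x j`. -/
def mloc {n : ℕ} (A : Matrix (Fin n) (Fin n) ℝ) (x : Fin n → ℝ) (i : Fin n) : ℝ :=
  ∑ j, A i j * x j

/-- Average local field `m̄(x)`. -/
def mbar {n : ℕ} (A : Matrix (Fin n) (Fin n) ℝ) (x : Fin n → ℝ) : ℝ :=
  (1 / (n : ℝ)) * ∑ i, mloc A x i

/-- `T_n(x) = (1/n) ∑_i (m_i(x) - m̄(x))²`. -/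
def Tstat {n : ℕ} (A : Matrix (Fin n) (Fin n) ℝ) (x : Fin n → ℝ) : ℝ :=
  (1 / (n : ℝ)) * ∑ i, (mloc A x i - mbar A x) ^ 2

/-- Unnormalized Ising weight `exp((β/2) xᵀAx + B ∑ x_i)`. -/
def isingWt {n : ℕ} (A : Matrix (Fin n) (Fin n) ℝ) (β B : ℝ) (x : Fin n → ℝ) : ℝ :=
  Real.exp (β / 2 * ∑ i, ∑ j, A i j * x i * x j + B * ∑ i, x i)

/-- Probability of the event `E` under the Ising measure `P_{n,β,B}`. -/
def isingProb {n : ℕ} (A : Matrix (Fin n) (Fin n) ℝ) (β B : ℝ) (E : Set (Fin n → ℝ)) : ℝ :=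
  (∑ σ : Fin n → Bool, E.indicator (isingWt A β B) (spinVec n σ)) /
    (∑ σ : Fin n → Bool, isingWt A β B (spinVec n σ))

/-- Expectation of `f` under the Ising measure `P_{n,β,B}`. -/
def isingExp {n : ℕ} (A : Matrix (Fin n) (Fin n) ℝ) (β B : ℝ) (f : (Fin n → ℝ) → ℝ) : ℝ :=
  (∑ σ : Fin n → Bool, f (spinVec n σ) * isingWt A β B (spinVec n σ)) /
    (∑ σ : Fin n → Bool, isingWt A β B (spinVec n σ))

/-- Pseudo-likelihood equation `Q_n(β,B|x)`. -/
def Qfun {n : ℕ} (A : Matrix (Fin n) (Fin n) ℝ) (β B : ℝ) (x : Fin n → ℝ) : ℝ :=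
  ∑ i, mloc A x i * (x i - Real.tanh (β * mloc A x i + B))

/-- Pseudo-likelihood equation `R_n(β,B|x)`. -/
def Rfun {n : ℕ} (A : Matrix (Fin n) (Fin n) ℝ) (β B : ℝ) (x : Fin n → ℝ) : ℝ :=
  ∑ i, (x i - Real.tanh (β * mloc A x i + B))

/-- `b_i(x) = tanh(β m_i(x) + B)`. -/
def bvec {n : ℕ} (A : Matrix (Fin n) (Fin n) ℝ) (β B : ℝ) (x : Fin n → ℝ) : Fin n → ℝ :=
  fun i => Real.tanh (β * mloc A x i + B)

/-- `f_n(y) = (β/2) yᵀAy + B ∑ y_i`. -/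
def fN {n : ℕ} (A : Matrix (Fin n) (Fin n) ℝ) (β B : ℝ) (y : Fin n → ℝ) : ℝ :=
  β / 2 * ∑ i, ∑ j, A i j * y i * y j + B * ∑ i, y i

/-- Entropy term `I(y)` (with `0 log 0 = 0`, as `Real.log 0 = 0`). -/
def entI {n : ℕ} (y : Fin n → ℝ) : ℝ :=
  ∑ i, ((1 + y i) / 2 * Real.log ((1 + y i) / 2) + (1 - y i) / 2 * Real.log ((1 - y i) / 2))

/-!
Off the event, every spin is aligned with its local field or every spin is anti-aligned (a
constant configuration is aligned). There the pseudo-likelihood score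
`Q = ∑ mᵢ (xᵢ - tanh (β mᵢ + B))` is at least a constant times `∑ |mᵢ|`, while the score
`W = ∑ dᵢ (xᵢ - tanh (β mᵢ + B))` weighted by the row sums `dᵢ` is at least
`|tanh B| ∑ dᵢ - (1 + βγ) ∑ |mᵢ|`; by (NT) `∑ dᵢ ≥ c n`, so `Q` or `W` is of order `n`.
Under the Ising measure both scores have second moment `O(n)`: the conditional mean of `xᵢ` given
the other spins is `tanh (β mᵢ + B)`, so each summand is centred against anything not depending
on `xᵢ`, and by (BD) flipping one spin changes a score by `O(1)` (Chatterjee's exchangeable pair).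
Chebyshev's inequality bounds the probability of the complement by `O(1/n)`.
-/

open Finset Matrix

namespace Real

theorem hasDerivAt_tanh (x : ℝ) : HasDerivAt tanh (1 / cosh x ^ 2) x := by
  have h := (hasDerivAt_sinh x).div (hasDerivAt_cosh x) (cosh_pos x).ne'
  rw [show tanh = sinh / cosh from funext tanh_eq_sinh_div_cosh]
  refine h.congr_deriv ?_
  rw [← sq, ← sq, cosh_sq x]; ring

theorem tanh_strictMono : StrictMono tanh :=
  strictMono_of_hasDerivAt_pos hasDerivAt_tanh fun x => by positivity

theorem lipschitzWith_one_tanh : LipschitzWith 1 tanh := by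
  refine lipschitzWith_of_nnnorm_deriv_le (fun x => (hasDerivAt_tanh x).differentiableAt)
    fun x => ?_
  rw [(hasDerivAt_tanh x).deriv, ← NNReal.coe_le_coe, coe_nnnorm, NNReal.coe_one, norm_div,
    norm_one, norm_pow, norm_of_nonneg (cosh_pos x).le]
  exact div_le_one_of_le₀ (one_le_pow₀ (one_le_cosh x)) (by positivity)

theorem abs_tanh_sub_tanh_le (a b : ℝ) : |tanh a - tanh b| ≤ |a - b| := by
  simpa [dist_eq] using lipschitzWith_one_tanh.dist_le_mul a b

theorem tanh_nonneg {x : ℝ} (hx : 0 ≤ x) : 0 ≤ tanh x := by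
  simpa using tanh_strictMono.monotone hx

theorem abs_tanh (x : ℝ) : |tanh x| = tanh |x| := by
  rcases le_total 0 x with hx | hx
  · rw [abs_of_nonneg hx, abs_of_nonneg (tanh_nonneg hx)]
  · rw [abs_of_nonpos hx, tanh_neg, abs_of_nonpos (by simpa using tanh_nonneg (neg_nonneg.2 hx))]

theorem abs_tanh_le_tanh {x y : ℝ} (h : |x| ≤ y) : |tanh x| ≤ tanh y :=
  abs_tanh x ▸ tanh_strictMono.monotone h

theorem one_sub_tanh_eq (x : ℝ) : 1 - tanh x = exp (-(2 * x)) * (1 + tanh x) := by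
  have hc := (cosh_pos x).ne'
  have hsub : 1 - tanh x = exp (-x) / cosh x := by
    rw [tanh_eq_sinh_div_cosh, ← cosh_sub_sinh]; field_simp
  have hadd : 1 + tanh x = exp x / cosh x := by
    rw [tanh_eq_sinh_div_cosh, ← cosh_add_sinh]; field_simp
  rw [hsub, hadd, mul_div_assoc', ← exp_add]
  ring_nf

theorem sub_tanh_add_exp_mul_neg_sub_tanh {s : ℝ} (hs : s = 1 ∨ s = -1) (θ : ℝ) :
    (s - tanh θ) + exp (-(2 * s * θ)) * (-s - tanh θ) = 0 := by
  have h := one_sub_tanh_eq θ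
  rcases hs with rfl | rfl
  · rw [mul_one]; linear_combination h
  · have he : exp (2 * θ) * exp (-(2 * θ)) = 1 := by
      rw [← exp_add, add_neg_cancel, exp_zero]
    rw [show -(2 * -1 * θ) = 2 * θ by ring]
    linear_combination exp (2 * θ) * h + (1 + tanh θ) * he

end Real

section Flip

variable {n : ℕ}

def flipAt (i : Fin n) (x : Fin n → ℝ) : Fin n → ℝ := Function.update x i (-x i)

@[simp] theorem flipAt_apply_self (i : Fin n) (x : Fin n → ℝ) : flipAt i x i = -x i :=
  Function.update_self i _ x

theorem flipAt_apply_of_ne {i j : Fin n} (h : j ≠ i) (x : Fin n → ℝ) : flipAt i x j = x j :=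
  Function.update_of_ne h _ x

@[simp] theorem flipAt_flipAt (i : Fin n) (x : Fin n → ℝ) : flipAt i (flipAt i x) = x := by
  ext j
  rcases eq_or_ne j i with rfl | h
  · simp
  · simp [flipAt_apply_of_ne h]

theorem flipAt_eq_sub_single (i : Fin n) (x : Fin n → ℝ) :
    flipAt i x = x - Pi.single i (2 * x i) := by
  ext j
  rcases eq_or_ne j i with rfl | h
  · simp only [flipAt_apply_self, Pi.sub_apply, Pi.single_eq_same]; ring
  · simp [flipAt_apply_of_ne h, h]

theorem abs_flipAt_apply (i j : Fin n) (x : Fin n → ℝ) : |flipAt i x j| = |x j| := by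
  rcases eq_or_ne j i with rfl | h
  · simp
  · rw [flipAt_apply_of_ne h]

theorem abs_spinVec (σ : Fin n → Bool) (j : Fin n) : |spinVec n σ j| = 1 := by
  unfold spinVec; split_ifs <;> simp

theorem spinVec_update_not (i : Fin n) (σ : Fin n → Bool) :
    spinVec n (Function.update σ i (!σ i)) = flipAt i (spinVec n σ) := by
  ext j
  rcases eq_or_ne j i with rfl | h
  · cases h : σ j <;> simp [spinVec, h]
  · simp [spinVec, flipAt_apply_of_ne h, h]

theorem sum_spinVec_flipAt {M : Type*} [AddCommMonoid M] (i : Fin n) (F : (Fin n → ℝ) → M) :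
    ∑ σ : Fin n → Bool, F (flipAt i (spinVec n σ)) = ∑ σ : Fin n → Bool, F (spinVec n σ) := by
  have hinv : Function.Involutive fun σ : Fin n → Bool => Function.update σ i (!σ i) := by
    intro σ; ext j
    rcases eq_or_ne j i with rfl | h <;> simp [*]
  simpa only [Function.comp_apply, Function.Involutive.coe_toPerm, spinVec_update_not] using
    Equiv.sum_comp hinv.toPerm (F ∘ spinVec n)

end Flip

section LocalField

variable {n : ℕ} (A : Matrix (Fin n) (Fin n) ℝ)

theorem mloc_eq_mulVec (x : Fin n → ℝ) (i : Fin n) : mloc A x i = (A *ᵥ x) i := rfl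

theorem mloc_flipAt (i k : Fin n) (x : Fin n → ℝ) :
    mloc A (flipAt i x) k = mloc A x k - 2 * A k i * x i := by
  simp only [mloc, flipAt_eq_sub_single, Pi.sub_apply, mul_sub, sum_sub_distrib, Pi.single_apply,
    mul_ite, mul_zero, sum_ite_eq', mem_univ, if_true]
  ring

theorem mloc_flipAt_self (hdiag : ∀ i, A i i = 0) (i : Fin n) (x : Fin n → ℝ) :
    mloc A (flipAt i x) i = mloc A x i := by
  rw [mloc_flipAt, hdiag]; ring

theorem abs_mloc_le {γ : ℝ} (hnn : ∀ i j, 0 ≤ A i j) (hγ : ∀ i, ∑ j, A i j ≤ γ)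
    {x : Fin n → ℝ} (hx : ∀ j, |x j| ≤ 1) (i : Fin n) : |mloc A x i| ≤ γ :=
  calc |mloc A x i| ≤ ∑ j, |A i j * x j| := abs_sum_le_sum_abs _ _
    _ ≤ ∑ j, A i j := sum_le_sum fun j _ => by
        rw [abs_mul, abs_of_nonneg (hnn i j)]; exact mul_le_of_le_one_right (hnn i j) (hx j)
    _ ≤ γ := hγ i

theorem quadForm_eq_dotProduct (x : Fin n → ℝ) :
    ∑ i, ∑ j, A i j * x i * x j = x ⬝ᵥ (A *ᵥ x) := by
  simp only [dotProduct, mulVec, mul_sum]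
  exact sum_congr rfl fun i _ => sum_congr rfl fun j _ => by ring

theorem quadForm_flipAt (hs : A.IsSymm) (hdiag : ∀ i, A i i = 0) (i : Fin n) (x : Fin n → ℝ) :
    ∑ j, ∑ k, A j k * flipAt i x j * flipAt i x k
      = ∑ j, ∑ k, A j k * x j * x k - 4 * x i * mloc A x i := by
  set v : Fin n → ℝ := Pi.single i (2 * x i)
  have hxAv : x ⬝ᵥ (A *ᵥ v) = 2 * x i * mloc A x i := by
    rw [dotProduct_mulVec, ← mulVec_transpose, hs.eq, dotProduct_single, mloc_eq_mulVec]; ring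
  have hvAv : v ⬝ᵥ (A *ᵥ v) = 0 := by
    simp [v, single_dotProduct, mulVec_single, hdiag]
  have hvAx : v ⬝ᵥ (A *ᵥ x) = 2 * x i * mloc A x i := by
    rw [single_dotProduct, mloc_eq_mulVec]
  simp only [quadForm_eq_dotProduct, flipAt_eq_sub_single, mulVec_sub, dotProduct_sub,
    sub_dotProduct]
  rw [hxAv, hvAv, hvAx]; ring

theorem isingWt_flipAt (hs : A.IsSymm) (hdiag : ∀ i, A i i = 0) (β B : ℝ) (i : Fin n)
    (x : Fin n → ℝ) :
    isingWt A β B (flipAt i x)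
      = isingWt A β B x * Real.exp (-(2 * x i * (β * mloc A x i + B))) := by
  have hsum : ∑ j, flipAt i x j = ∑ j, x j - 2 * x i := by
    simp [flipAt_eq_sub_single, sum_sub_distrib]
  rw [isingWt, isingWt, quadForm_flipAt A hs hdiag, hsum, ← Real.exp_add]
  ring_nf

end LocalField

section IsingExpectation

variable {n : ℕ} (A : Matrix (Fin n) (Fin n) ℝ) (β B : ℝ)

theorem sum_isingWt_pos : 0 < ∑ σ : Fin n → Bool, isingWt A β B (spinVec n σ) :=
  sum_pos (fun _ _ => Real.exp_pos _) univ_nonempty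

theorem isingExp_add (f g : (Fin n → ℝ) → ℝ) :
    isingExp A β B (fun x => f x + g x) = isingExp A β B f + isingExp A β B g := by
  simp only [isingExp, add_mul, sum_add_distrib, add_div]

theorem isingExp_sub (f g : (Fin n → ℝ) → ℝ) :
    isingExp A β B (fun x => f x - g x) = isingExp A β B f - isingExp A β B g := by
  simp only [isingExp, sub_mul, sum_sub_distrib, sub_div]

theorem isingExp_const_mul (c : ℝ) (f : (Fin n → ℝ) → ℝ) :
    isingExp A β B (fun x => c * f x) = c * isingExp A β B f := by
  simp only [isingExp, mul_assoc, ← mul_sum, mul_div_assoc]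

theorem isingExp_div_const (f : (Fin n → ℝ) → ℝ) (c : ℝ) :
    isingExp A β B (fun x => f x / c) = isingExp A β B f / c := by
  simp only [div_eq_inv_mul, isingExp_const_mul]

theorem isingExp_sum {ι : Type*} (s : Finset ι) (f : ι → (Fin n → ℝ) → ℝ) :
    isingExp A β B (fun x => ∑ i ∈ s, f i x) = ∑ i ∈ s, isingExp A β B (f i) := by
  simp only [isingExp, sum_mul, ← sum_div]
  rw [sum_comm]

theorem isingExp_const (c : ℝ) : isingExp A β B (fun _ => c) = c := by
  rw [isingExp, ← mul_sum, mul_div_assoc, div_self (sum_isingWt_pos A β B).ne', mul_one]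

variable {A β B} in
theorem isingExp_mono {f g : (Fin n → ℝ) → ℝ} (h : ∀ σ, f (spinVec n σ) ≤ g (spinVec n σ)) :
    isingExp A β B f ≤ isingExp A β B g :=
  div_le_div_of_nonneg_right
    (sum_le_sum fun σ _ => mul_le_mul_of_nonneg_right (h σ) (Real.exp_pos _).le)
    (sum_isingWt_pos A β B).le

theorem isingProb_eq_isingExp (E : Set (Fin n → ℝ)) :
    isingProb A β B E = isingExp A β B (E.indicator 1) := by
  unfold isingProb isingExp
  congr 1
  refine sum_congr rfl fun σ _ => ?_
  by_cases h : spinVec n σ ∈ E <;> simp [h]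

theorem isingProb_add_isingProb_compl (E : Set (Fin n → ℝ)) :
    isingProb A β B E + isingProb A β B Eᶜ = 1 := by
  simp only [isingProb_eq_isingExp, ← isingExp_add, Set.indicator_self_add_compl_apply,
    Pi.one_apply, isingExp_const]

theorem isingProb_nonneg (E : Set (Fin n → ℝ)) : 0 ≤ isingProb A β B E := by
  rw [isingProb_eq_isingExp, ← isingExp_const A β B 0]
  exact isingExp_mono fun σ => Set.indicator_nonneg (fun _ _ => zero_le_one) _

theorem isingProb_le_one (E : Set (Fin n → ℝ)) : isingProb A β B E ≤ 1 := by
  linarith [isingProb_add_isingProb_compl A β B E, isingProb_nonneg A β B Eᶜ]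

variable {A β B} in
theorem isingProb_le_isingExp_sq_div {E : Set (Fin n → ℝ)} {T : (Fin n → ℝ) → ℝ} {t : ℝ}
    (ht : 0 < t) (hE : ∀ σ, spinVec n σ ∈ E → t ≤ T (spinVec n σ)) :
    isingProb A β B E ≤ isingExp A β B (fun x => T x ^ 2) / t ^ 2 := by
  rw [isingProb_eq_isingExp, ← isingExp_div_const]
  refine isingExp_mono fun σ => ?_
  by_cases h : spinVec n σ ∈ E
  · rw [Set.indicator_of_mem h, Pi.one_apply, one_le_div (by positivity)]
    exact pow_le_pow_left₀ ht.le (hE σ h) 2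
  · rw [Set.indicator_of_notMem h]; positivity

/-- The conditional law of `x i` given the other spins is proportional to
`exp (x i * (β * mloc A x i + B))`, whose mean is `bvec A β B x i`. -/
theorem isingExp_mul_sub_bvec_eq_zero (hs : A.IsSymm) (hdiag : ∀ i, A i i = 0) (i : Fin n)
    {H : (Fin n → ℝ) → ℝ} (hH : ∀ x, H (flipAt i x) = H x) :
    isingExp A β B (fun x => H x * (x i - bvec A β B x i)) = 0 := by
  set F : (Fin n → ℝ) → ℝ := fun x => H x * (x i - bvec A β B x i) * isingWt A β B x
  have hpair : ∀ σ, F (spinVec n σ) + F (flipAt i (spinVec n σ)) = 0 := by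
    intro σ
    have hspin : spinVec n σ i = 1 ∨ spinVec n σ i = -1 := by unfold spinVec; split_ifs <;> simp
    have hb : bvec A β B (flipAt i (spinVec n σ)) i = bvec A β B (spinVec n σ) i := by
      simp only [bvec, mloc_flipAt_self A hdiag]
    simp only [F, hH, hb, flipAt_apply_self, isingWt_flipAt A hs hdiag]
    unfold bvec
    linear_combination (H (spinVec n σ) * isingWt A β B (spinVec n σ)) *
      Real.sub_tanh_add_exp_mul_neg_sub_tanh hspin (β * mloc A (spinVec n σ) i + B)
  have hsum := sum_spinVec_flipAt i F
  have htwice : 2 * ∑ σ : Fin n → Bool, F (spinVec n σ) = 0 := by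
    rw [two_mul]; nth_rw 2 [← hsum]
    rw [← sum_add_distrib]; exact sum_eq_zero fun σ _ => hpair σ
  simp only [isingExp, F] at htwice ⊢
  rw [(mul_eq_zero.1 htwice).resolve_left two_ne_zero, zero_div]

end IsingExpectation

section PseudoScore

variable {n : ℕ} (A : Matrix (Fin n) (Fin n) ℝ) (β B : ℝ)

def pseudoScore (h : Fin n → (Fin n → ℝ) → ℝ) (x : Fin n → ℝ) : ℝ :=
  ∑ i, h i x * (x i - bvec A β B x i)

theorem Qfun_eq_pseudoScore : Qfun A β B = pseudoScore A β B fun i x => mloc A x i := rfl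

theorem abs_sub_bvec_le {x : Fin n → ℝ} {i : Fin n} (hx : |x i| ≤ 1) :
    |x i - bvec A β B x i| ≤ 2 := by
  have := (Real.abs_tanh_lt_one (β * mloc A x i + B)).le
  calc |x i - bvec A β B x i| ≤ |x i| + |bvec A β B x i| := abs_sub _ _
    _ ≤ 2 := by unfold bvec; linarith

/-- The exchangeable-pair bound: `h i` does not see `x i`, so each summand of the score is centred
against any function that does not see `x i` either, and only the flip increments remain. -/
theorem isingExp_sq_pseudoScore_le (hs : A.IsSymm) (hdiag : ∀ i, A i i = 0)
    {h : Fin n → (Fin n → ℝ) → ℝ} {M D : ℝ} (hinv : ∀ i x, h i (flipAt i x) = h i x)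
    (hM : ∀ i σ, |h i (spinVec n σ)| ≤ M)
    (hD : ∀ i σ, |pseudoScore A β B h (spinVec n σ)
      - pseudoScore A β B h (flipAt i (spinVec n σ))| ≤ D) :
    isingExp A β B (fun x => pseudoScore A β B h x ^ 2) ≤ n * (M * D) := by
  set T := pseudoScore A β B h
  have hterm : ∀ i, isingExp A β B (fun x => h i x * (x i - bvec A β B x i) * T x) ≤ M * D := by
    intro i
    set S : (Fin n → ℝ) → ℝ := fun x => (T x + T (flipAt i x)) / 2
    have hcenter := isingExp_mul_sub_bvec_eq_zero A β B hs hdiag i (H := fun x => h i x * S x)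
      fun x => by simp only [S, hinv, flipAt_flipAt, add_comm]
    have hbound : ∀ σ, h i (spinVec n σ) * (spinVec n σ i - bvec A β B (spinVec n σ) i)
        * (T (spinVec n σ) - S (spinVec n σ)) ≤ M * D := by
      intro σ
      have hTS : |T (spinVec n σ) - S (spinVec n σ)| ≤ D / 2 := by
        simp only [S]
        rw [show ∀ a b : ℝ, a - (a + b) / 2 = (a - b) / 2 by intros; ring, abs_div, abs_two]
        linarith [hD i σ]
      have hg := abs_sub_bvec_le A β B (abs_spinVec σ i).le
      have hM0 : 0 ≤ M := (abs_nonneg _).trans (hM i σ)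
      refine (le_abs_self _).trans ?_
      rw [abs_mul, abs_mul]
      calc _ ≤ M * 2 * (D / 2) := by gcongr; exact hM i σ
        _ = M * D := by ring
    calc isingExp A β B (fun x => h i x * (x i - bvec A β B x i) * T x)
        = isingExp A β B (fun x => h i x * (x i - bvec A β B x i) * T x)
          - isingExp A β B (fun x => h i x * S x * (x i - bvec A β B x i)) := by
          rw [hcenter, sub_zero]
      _ = isingExp A β B (fun x => h i x * (x i - bvec A β B x i) * (T x - S x)) := by
          rw [← isingExp_sub]; congr 1; ext x; ring
      _ ≤ isingExp A β B (fun _ => M * D) := isingExp_mono hbound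
      _ = M * D := isingExp_const A β B _
  calc isingExp A β B (fun x => T x ^ 2)
      = ∑ i, isingExp A β B (fun x => h i x * (x i - bvec A β B x i) * T x) := by
        rw [← isingExp_sum]; congr 1; ext x; rw [sq]
        nth_rw 1 [show T x = ∑ i, h i x * (x i - bvec A β B x i) from rfl]
        rw [sum_mul]
    _ ≤ ∑ _i : Fin n, M * D := sum_le_sum fun i _ => hterm i
    _ = n * (M * D) := by simp

end PseudoScore

section FlipIncrement

variable {n : ℕ} {A : Matrix (Fin n) (Fin n) ℝ} {β : ℝ} (B : ℝ)

theorem abs_mloc_sub_mloc_flipAt_le (hnn : ∀ i j, 0 ≤ A i j) {x : Fin n → ℝ} {i : Fin n}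
    (hx : |x i| ≤ 1) (j : Fin n) : |mloc A x j - mloc A (flipAt i x) j| ≤ 2 * A j i := by
  rw [mloc_flipAt, sub_sub_cancel, abs_mul, abs_of_nonneg (by linarith [hnn j i])]
  exact mul_le_of_le_one_right (by linarith [hnn j i]) hx

theorem abs_bvec_sub_bvec_flipAt_le (hnn : ∀ i j, 0 ≤ A i j) (hβ : 0 ≤ β) {x : Fin n → ℝ}
    {i : Fin n} (hx : |x i| ≤ 1) (j : Fin n) :
    |bvec A β B x j - bvec A β B (flipAt i x) j| ≤ 2 * β * A j i :=
  calc |bvec A β B x j - bvec A β B (flipAt i x) j|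
      ≤ |β * (mloc A x j - mloc A (flipAt i x) j)| := by
        unfold bvec; convert Real.abs_tanh_sub_tanh_le _ _ using 2; ring
    _ ≤ β * (2 * A j i) := by
        rw [abs_mul, abs_of_nonneg hβ]; gcongr; exact abs_mloc_sub_mloc_flipAt_le hnn hx j
    _ = 2 * β * A j i := by ring

theorem sum_col_le_of_isSymm (hs : A.IsSymm) {γ : ℝ} (hγ : ∀ i, ∑ j, A i j ≤ γ) (i : Fin n) :
    ∑ j, A j i ≤ γ := by
  simpa only [hs.apply i] using hγ i

/-- Flipping `x i` moves the `j`-th summand only through `A j i`, except for the summand `j = i`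
itself, which moves by at most `2 M`. -/
theorem abs_pseudoScore_sub_flipAt_le (hs : A.IsSymm) (hnn : ∀ i j, 0 ≤ A i j) {γ : ℝ}
    (hγ : ∀ i, ∑ j, A i j ≤ γ) (hβ : 0 ≤ β) {h : Fin n → (Fin n → ℝ) → ℝ} {M L : ℝ}
    (hL0 : 0 ≤ L) {x : Fin n → ℝ} (hx : ∀ j, |x j| ≤ 1) (i : Fin n)
    (hM : ∀ j, |h j (flipAt i x)| ≤ M) (hL : ∀ j, |h j x - h j (flipAt i x)| ≤ L * A j i) :
    |pseudoScore A β B h x - pseudoScore A β B h (flipAt i x)| ≤ 2 * M + 2 * (L + β * M) * γ := by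
  set y := flipAt i x
  have hM0 : 0 ≤ M := (abs_nonneg _).trans (hM i)
  have hspin : ∀ j, |x j - y j| ≤ (Pi.single i 2 : Fin n → ℝ) j := by
    intro j
    simp only [y]
    rcases eq_or_ne j i with rfl | hj
    · rw [flipAt_apply_self, sub_neg_eq_add, ← two_mul, abs_mul, abs_two, Pi.single_eq_same]
      linarith [hx j]
    · rw [flipAt_apply_of_ne hj, sub_self, abs_zero, Pi.single_eq_of_ne hj]
  have hterm : ∀ j, |h j x * (x j - bvec A β B x j) - h j y * (y j - bvec A β B y j)|
      ≤ M * (Pi.single i 2 : Fin n → ℝ) j + 2 * (L + β * M) * A j i := by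
    intro j
    have hg : |(x j - bvec A β B x j) - (y j - bvec A β B y j)|
        ≤ (Pi.single i 2 : Fin n → ℝ) j + 2 * β * A j i :=
      calc _ = |(x j - y j) - (bvec A β B x j - bvec A β B y j)| := by ring_nf
        _ ≤ |x j - y j| + |bvec A β B x j - bvec A β B y j| := abs_sub _ _
        _ ≤ _ := add_le_add (hspin j) (abs_bvec_sub_bvec_flipAt_le B hnn hβ (hx i) j)
    calc _ = |(h j x - h j y) * (x j - bvec A β B x j)
            + h j y * ((x j - bvec A β B x j) - (y j - bvec A β B y j))| := by ring_nf
      _ ≤ L * A j i * 2 + M * ((Pi.single i 2 : Fin n → ℝ) j + 2 * β * A j i) := by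
          refine (abs_add_le _ _).trans (add_le_add ?_ ?_) <;> rw [abs_mul]
          · exact mul_le_mul (hL j) (abs_sub_bvec_le A β B (hx j)) (abs_nonneg _)
              (mul_nonneg hL0 (hnn j i))
          · exact mul_le_mul (hM j) hg (abs_nonneg _) hM0
      _ = _ := by ring
  calc |pseudoScore A β B h x - pseudoScore A β B h y|
      ≤ ∑ j, |h j x * (x j - bvec A β B x j) - h j y * (y j - bvec A β B y j)| := by
        rw [pseudoScore, pseudoScore, ← sum_sub_distrib]; exact abs_sum_le_sum_abs _ _
    _ ≤ ∑ j, (M * (Pi.single i 2 : Fin n → ℝ) j + 2 * (L + β * M) * A j i) :=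
        sum_le_sum fun j _ => hterm j
    _ = 2 * M + 2 * (L + β * M) * ∑ j, A j i := by
        rw [sum_add_distrib, ← mul_sum, ← mul_sum, sum_pi_single']; simp; ring
    _ ≤ 2 * M + 2 * (L + β * M) * γ := by
        have hcoef : 0 ≤ 2 * (L + β * M) := by positivity
        gcongr
        exact sum_col_le_of_isSymm hs hγ i

end FlipIncrement

section Alignment

variable {n : ℕ} {A : Matrix (Fin n) (Fin n) ℝ} {β γ : ℝ} (B : ℝ)

def rowSumScore (A : Matrix (Fin n) (Fin n) ℝ) (β B : ℝ) : (Fin n → ℝ) → ℝ :=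
  pseudoScore A β B fun i _ => ∑ j, A i j

theorem sum_mloc_eq_of_isSymm (hs : A.IsSymm) (x : Fin n → ℝ) :
    ∑ i, mloc A x i = ∑ i, (∑ j, A i j) * x i := by
  simp only [mloc, sum_mul]
  rw [sum_comm]
  exact sum_congr rfl fun i _ => sum_congr rfl fun j _ => by rw [hs.apply i j]

theorem const_mul_mloc_const (hnn : ∀ i j, 0 ≤ A i j) {s : ℝ} (hs : s = 1 ∨ s = -1) (i : Fin n) :
    s * mloc A (fun _ => s) i = |mloc A (fun _ => s) i| := by
  have hrow : 0 ≤ ∑ j, A i j := sum_nonneg fun j _ => hnn i j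
  have hm : mloc A (fun _ => s) i = s * ∑ j, A i j := by rw [mloc, ← sum_mul, mul_comm]
  rcases hs with rfl | rfl
  · rw [hm, one_mul, one_mul, abs_of_nonneg hrow]
  · rw [hm, abs_mul, abs_neg, abs_one, one_mul, abs_of_nonneg hrow]; ring

/-- Alignment rules out cancellation between the summands of `Qfun`. -/
theorem mul_sum_abs_mloc_le_abs_Qfun (hnn : ∀ i j, 0 ≤ A i j) (hγ : ∀ i, ∑ j, A i j ≤ γ)
    (hβ : 0 ≤ β) {x : Fin n → ℝ} (hx : ∀ j, |x j| ≤ 1)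
    (hal : (∀ i, x i * mloc A x i = |mloc A x i|) ∨ (∀ i, x i * mloc A x i = -|mloc A x i|)) :
    (1 - Real.tanh (β * γ + |B|)) * ∑ i, |mloc A x i| ≤ |Qfun A β B x| := by
  obtain ⟨ε, hε, hε1, hal⟩ : ∃ ε : ℝ, ε * ε = 1 ∧ |ε| = 1 ∧
      ∀ i, x i * mloc A x i = ε * |mloc A x i| := by
    rcases hal with h | h
    exacts [⟨1, by norm_num, by norm_num, fun i => by rw [h i, one_mul]⟩,
      ⟨-1, by norm_num, by norm_num, fun i => by rw [h i, neg_one_mul]⟩]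
  have hterm : ∀ i, (1 - Real.tanh (β * γ + |B|)) * |mloc A x i|
      ≤ ε * (mloc A x i * (x i - Real.tanh (β * mloc A x i + B))) := by
    intro i
    have htanh : |Real.tanh (β * mloc A x i + B)| ≤ Real.tanh (β * γ + |B|) := by
      refine Real.abs_tanh_le_tanh ((abs_add_le _ _).trans (add_le_add_left ?_ _))
      rw [abs_mul, abs_of_nonneg hβ]
      exact mul_le_mul_of_nonneg_left (abs_mloc_le A hnn hγ hx i) hβ
    have hcross : -(ε * mloc A x i * Real.tanh (β * mloc A x i + B))
        ≥ -(|mloc A x i| * Real.tanh (β * γ + |B|)) := by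
      refine neg_le_neg ((le_abs_self _).trans ?_)
      rw [abs_mul, abs_mul, hε1, one_mul]
      exact mul_le_mul_of_nonneg_left htanh (abs_nonneg _)
    calc (1 - Real.tanh (β * γ + |B|)) * |mloc A x i|
        = |mloc A x i| - |mloc A x i| * Real.tanh (β * γ + |B|) := by ring
      _ ≤ ε * (x i * mloc A x i) - ε * mloc A x i * Real.tanh (β * mloc A x i + B) := by
          rw [hal i, ← mul_assoc, hε, one_mul]; linarith
      _ = _ := by ring
  calc (1 - Real.tanh (β * γ + |B|)) * ∑ i, |mloc A x i|
      ≤ ε * Qfun A β B x := by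
        rw [mul_sum, Qfun, mul_sum]; exact sum_le_sum fun i _ => hterm i
    _ ≤ |ε * Qfun A β B x| := le_abs_self _
    _ = |Qfun A β B x| := by rw [abs_mul, hε1, one_mul]

/-- `rowSumScore` splits as `∑ mloc - tanh B * ∑ A - ∑ (∑ j, A i j) * (bvec i - tanh B)`, and the
first and last terms are controlled by `∑ |mloc|`. -/
theorem abs_tanh_mul_sum_le (hs : A.IsSymm) (hnn : ∀ i j, 0 ≤ A i j) (hγ : ∀ i, ∑ j, A i j ≤ γ)
    (hβ : 0 ≤ β) (x : Fin n → ℝ) :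
    |Real.tanh B| * ∑ i, ∑ j, A i j
      ≤ (1 + β * γ) * ∑ i, |mloc A x i| + |rowSumScore A β B x| := by
  set r : Fin n → ℝ := fun i => ∑ j, A i j
  set t : Fin n → ℝ := fun i => Real.tanh (β * mloc A x i + B)
  have hr : ∀ i, 0 ≤ r i := fun i => sum_nonneg fun j _ => hnn i j
  have hsplit : Real.tanh B * ∑ i, r i
      = ∑ i, r i * (Real.tanh B - t i) + ∑ i, mloc A x i - rowSumScore A β B x := by
    simp only [rowSumScore, pseudoScore, bvec, sum_mloc_eq_of_isSymm hs, r, t]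
    rw [mul_sum, ← sum_add_distrib, ← sum_sub_distrib]
    exact sum_congr rfl fun i _ => by ring
  have hdrift : |∑ i, r i * (Real.tanh B - t i)| ≤ β * γ * ∑ i, |mloc A x i| := by
    rw [mul_sum]
    refine (abs_sum_le_sum_abs _ _).trans (sum_le_sum fun i _ => ?_)
    rw [abs_mul, abs_of_nonneg (hr i)]
    calc r i * |Real.tanh B - t i| ≤ γ * (β * |mloc A x i|) := by
          refine mul_le_mul (hγ i) ?_ (abs_nonneg _) ((hr i).trans (hγ i))
          refine (Real.abs_tanh_sub_tanh_le _ _).trans_eq ?_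
          rw [show B - (β * mloc A x i + B) = -(β * mloc A x i) by ring, abs_neg, abs_mul,
            abs_of_nonneg hβ]
      _ = β * γ * |mloc A x i| := by ring
  calc |Real.tanh B| * ∑ i, r i = |Real.tanh B * ∑ i, r i| := by
        rw [abs_mul, abs_of_nonneg (sum_nonneg fun i _ => hr i)]
    _ ≤ |∑ i, r i * (Real.tanh B - t i)| + |∑ i, mloc A x i| + |rowSumScore A β B x| := by
        rw [hsplit]
        exact (abs_sub _ _).trans (add_le_add (abs_add_le _ _) le_rfl)
    _ ≤ β * γ * ∑ i, |mloc A x i| + ∑ i, |mloc A x i| + |rowSumScore A β B x| :=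
        add_le_add (add_le_add hdrift (abs_sum_le_sum_abs _ _)) le_rfl
    _ = _ := by ring

theorem abs_tanh_mul_sum_le_of_aligned (hs : A.IsSymm) (hnn : ∀ i j, 0 ≤ A i j)
    (hγ : ∀ i, ∑ j, A i j ≤ γ) (hγ0 : 0 ≤ γ) (hβ : 0 ≤ β) {x : Fin n → ℝ} (hx : ∀ j, |x j| ≤ 1)
    (hal : (∀ i, x i * mloc A x i = |mloc A x i|) ∨ (∀ i, x i * mloc A x i = -|mloc A x i|)) :
    |Real.tanh B| * ∑ i, ∑ j, A i j
      ≤ (1 + β * γ) / (1 - Real.tanh (β * γ + |B|)) * |Qfun A β B x| + |rowSumScore A β B x| := by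
  have hκ : 0 < 1 - Real.tanh (β * γ + |B|) := sub_pos.2 (Real.tanh_lt_one _)
  refine (abs_tanh_mul_sum_le B hs hnn hγ hβ x).trans (add_le_add_left ?_ _)
  rw [div_mul_eq_mul_div, le_div_iff₀ hκ, mul_assoc, mul_comm _ (1 - _)]
  exact mul_le_mul_of_nonneg_left (mul_sum_abs_mloc_le_abs_Qfun B hnn hγ hβ hx hal) (by positivity)

end Alignment

section Concentration

variable {n : ℕ} {A : Matrix (Fin n) (Fin n) ℝ} {β γ : ℝ} (B : ℝ)

theorem abs_flipAt_spinVec_le (i : Fin n) (σ : Fin n → Bool) (j : Fin n) :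
    |flipAt i (spinVec n σ) j| ≤ 1 := by
  rw [abs_flipAt_apply, abs_spinVec]

theorem isingExp_Qfun_sq_le (hs : A.IsSymm) (hnn : ∀ i j, 0 ≤ A i j) (hdiag : ∀ i, A i i = 0)
    (hγ : ∀ i, ∑ j, A i j ≤ γ) (hβ : 0 ≤ β) :
    isingExp A β B (fun x => Qfun A β B x ^ 2) ≤ n * (γ * (2 * γ + 2 * (2 + β * γ) * γ)) := by
  simp only [Qfun_eq_pseudoScore]
  refine isingExp_sq_pseudoScore_le A β B hs hdiag (fun i x => mloc_flipAt_self A hdiag i x)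
    (fun i σ => abs_mloc_le A hnn hγ (fun j => (abs_spinVec σ j).le) i) fun i σ => ?_
  exact abs_pseudoScore_sub_flipAt_le B hs hnn hγ hβ zero_le_two (fun j => (abs_spinVec σ j).le) i
    (abs_mloc_le A hnn hγ (abs_flipAt_spinVec_le i σ))
    (abs_mloc_sub_mloc_flipAt_le hnn (abs_spinVec σ i).le)

theorem isingExp_rowSumScore_sq_le (hs : A.IsSymm) (hnn : ∀ i j, 0 ≤ A i j)
    (hdiag : ∀ i, A i i = 0) (hγ : ∀ i, ∑ j, A i j ≤ γ) (hβ : 0 ≤ β) :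
    isingExp A β B (fun x => rowSumScore A β B x ^ 2) ≤ n * (γ * (2 * γ + 2 * (β * γ) * γ)) := by
  have hrow : ∀ i, |∑ j, A i j| ≤ γ := fun i => by
    rw [abs_of_nonneg (sum_nonneg fun j _ => hnn i j)]; exact hγ i
  have := isingExp_sq_pseudoScore_le A β B hs hdiag (h := fun i _ => ∑ j, A i j)
    (fun _ _ => rfl) (fun i _ => hrow i) fun i σ =>
      abs_pseudoScore_sub_flipAt_le B hs hnn hγ hβ le_rfl (fun j => (abs_spinVec σ j).le) i
        (fun j => hrow j) fun j => by simp
  unfold rowSumScore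
  simpa only [zero_add] using this

/-- Chebyshev's inequality for `a * |Qfun| + |rowSumScore|` at level `|tanh B| * c * n`, where
`a = (1 + β γ) / (1 - tanh (β γ + |B|))`, using the two second-moment bounds above. -/
def isingTailConst (γ β B c : ℝ) : ℝ :=
  2 * (((1 + β * γ) / (1 - Real.tanh (β * γ + |B|))) ^ 2 * (γ * (2 * γ + 2 * (2 + β * γ) * γ))
    + γ * (2 * γ + 2 * (β * γ) * γ)) / (|Real.tanh B| * c) ^ 2

/-- The event `A_{2,n}ᶜ ∩ A_{3,n}ᶜ ∩ A_{4,n}ᶜ`. -/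
def nonAlignedSet (A : Matrix (Fin n) (Fin n) ℝ) : Set (Fin n → ℝ) :=
  {x | ¬ (∀ i, x i * mloc A x i = |mloc A x i|) ∧ ¬ (∀ i, x i * mloc A x i = -|mloc A x i|) ∧
    x ≠ (fun _ => 1) ∧ x ≠ (fun _ => -1)}

theorem aligned_of_notMem_nonAlignedSet (hnn : ∀ i j, 0 ≤ A i j) {x : Fin n → ℝ}
    (hx : x ∉ nonAlignedSet A) :
    (∀ i, x i * mloc A x i = |mloc A x i|) ∨ (∀ i, x i * mloc A x i = -|mloc A x i|) := by
  simp only [nonAlignedSet, Set.mem_ofPred_eq, not_and_or, not_not] at hx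
  rcases hx with h | h | rfl | rfl
  · exact .inl h
  · exact .inr h
  · exact .inl fun _ => const_mul_mloc_const hnn (.inl rfl) _
  · exact .inl fun _ => const_mul_mloc_const hnn (.inr rfl) _

theorem isingProb_compl_nonAlignedSet_le (hs : A.IsSymm) (hnn : ∀ i j, 0 ≤ A i j)
    (hdiag : ∀ i, A i i = 0) (hγ : ∀ i, ∑ j, A i j ≤ γ) (hγ0 : 0 ≤ γ) (hβ : 0 ≤ β) (hB : B ≠ 0)
    {c : ℝ} (hc0 : 0 < c) (hc : c * n ≤ ∑ i, ∑ j, A i j) (hn : 0 < n) :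
    isingProb A β B (nonAlignedSet A)ᶜ ≤ isingTailConst γ β B c / n := by
  set a := (1 + β * γ) / (1 - Real.tanh (β * γ + |B|))
  set t := |Real.tanh B| * c * n
  have hτ : 0 < |Real.tanh B| :=
    abs_pos.2 fun h => hB (Real.tanh_injective (h.trans Real.tanh_zero.symm))
  have hn' : (0 : ℝ) < n := Nat.cast_pos.2 hn
  have ht : 0 < t := by positivity
  refine (isingProb_le_isingExp_sq_div (T := fun x => a * |Qfun A β B x| + |rowSumScore A β B x|)
    ht fun σ hσ => ?_).trans ?_
  · calc t = |Real.tanh B| * (c * n) := mul_assoc _ _ _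
      _ ≤ |Real.tanh B| * ∑ i, ∑ j, A i j := mul_le_mul_of_nonneg_left hc hτ.le
      _ ≤ _ := abs_tanh_mul_sum_le_of_aligned B hs hnn hγ hγ0 hβ (fun j => (abs_spinVec σ j).le)
          (aligned_of_notMem_nonAlignedSet hnn hσ)
  calc _ ≤ isingExp A β B (fun x => 2 * a ^ 2 * Qfun A β B x ^ 2 + 2 * rowSumScore A β B x ^ 2)
          / t ^ 2 := by
        gcongr
        refine isingExp_mono fun σ => (add_sq_le).trans_eq ?_
        rw [mul_pow, sq_abs, sq_abs]; ring
    _ = (2 * a ^ 2 * isingExp A β B (fun x => Qfun A β B x ^ 2)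
          + 2 * isingExp A β B (fun x => rowSumScore A β B x ^ 2)) / t ^ 2 := by
        rw [isingExp_add, isingExp_const_mul, isingExp_const_mul]
    _ ≤ (2 * a ^ 2 * (n * (γ * (2 * γ + 2 * (2 + β * γ) * γ)))
          + 2 * (n * (γ * (2 * γ + 2 * (β * γ) * γ)))) / t ^ 2 := by
        gcongr
        · exact isingExp_Qfun_sq_le B hs hnn hdiag hγ hβ
        · exact isingExp_rowSumScore_sq_le B hs hnn hdiag hγ hβ
    _ = isingTailConst γ β B c / n := by
        rw [isingTailConst, show (1 + β * γ) / (1 - Real.tanh (β * γ + |B|)) = a from rfl]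
        simp only [t]
        field_simp

end Concentration

theorem exists_pos_eventually_mul_le_of_liminf_pos {u : ℕ → ℝ} (hu : ∀ n, 0 ≤ u n)
    (h : 0 < liminf (fun n : ℕ => (1 / (n : ℝ)) * u n) atTop) :
    ∃ c > 0, ∀ᶠ n : ℕ in atTop, c * n ≤ u n := by
  refine ⟨_, half_pos h, ?_⟩
  have hbdd : IsBoundedUnder (· ≥ ·) atTop fun n : ℕ => (1 / (n : ℝ)) * u n :=
    isBoundedUnder_of_eventually_ge (.of_forall fun n => by have := hu n; positivity)
  filter_upwards [eventually_lt_of_lt_liminf (half_lt_self h) hbdd, eventually_gt_atTop 0]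
    with n hlt hn
  rw [one_div_mul_eq_div, lt_div_iff₀ (Nat.cast_pos.2 hn)] at hlt
  exact hlt.le

/-- `P_{n,β₀,B₀}(A_{2,n}ᶜ ∩ A_{3,n}ᶜ ∩ A_{4,n}ᶜ) → 1`. -/
theorem stmt1 (A : (n : ℕ) → Matrix (Fin n) (Fin n) ℝ)
    (hsymm : ∀ n, (A n).IsSymm)
    (hnonneg : ∀ n, ∀ i j : Fin n, 0 ≤ A n i j)
    (hdiag : ∀ n, ∀ i : Fin n, A n i i = 0)
    (hBD : ∃ γ : ℝ, ∀ n, ∀ i : Fin n, (∑ j, A n i j) ≤ γ)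
    (hNT : 0 < liminf (fun n : ℕ => (1 / (n : ℝ)) * ∑ i, ∑ j, A n i j) atTop)
    (β₀ B₀ : ℝ) (hβ : 0 < β₀) (hB : B₀ ≠ 0) :
    Tendsto (fun n : ℕ => isingProb (A n) β₀ B₀
      {x | ¬ (∀ i, x i * mloc (A n) x i = |mloc (A n) x i|) ∧
           ¬ (∀ i, x i * mloc (A n) x i = -|mloc (A n) x i|) ∧
           x ≠ (fun _ => 1) ∧ x ≠ (fun _ => -1)}) atTop (nhds 1) := by
  obtain ⟨γ, hγ⟩ := hBD
  have hγ0 : 0 ≤ γ := by simpa [hdiag 1 0] using hγ 1 0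
  obtain ⟨c, hc0, hc⟩ := exists_pos_eventually_mul_le_of_liminf_pos
    (fun n => sum_nonneg fun i _ => sum_nonneg fun j _ => hnonneg n i j) hNT
  have hlower : ∀ᶠ n : ℕ in atTop,
      1 - isingTailConst γ β₀ B₀ c / n ≤ isingProb (A n) β₀ B₀ (nonAlignedSet (A n)) := by
    filter_upwards [hc, eventually_gt_atTop 0] with n hcn hn
    linarith [isingProb_add_isingProb_compl (A n) β₀ B₀ (nonAlignedSet (A n)),
      isingProb_compl_nonAlignedSet_le B₀ (hsymm n) (hnonneg n) (hdiag n) (hγ n) hγ0 hβ.le hB hc0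
        hcn hn]
  refine tendsto_of_tendsto_of_tendsto_of_le_of_le' ?_ tendsto_const_nhds hlower
    (.of_forall fun n => isingProb_le_one (A n) β₀ B₀ _)
  simpa using (tendsto_const_div_atTop_nhds_zero_nat (isingTailConst γ β₀ B₀ c)).const_sub 1
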